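/- Let (u, v, w) be a smooth solution of (KB) and (φ, ψ, θ) a smooth solution of the adjoint system (AKB) on ℝ². Define Cˣ = (3/5)φu² − (1/10)uθₓₓ + (4/5)vφ + (6/5)wψ + (1/4)θₓuₓ − (2/5)θuₓₓ + (3/2)t·uₜφu + t·uₜψv + t·uₜθw + (1/2)t·vₜψu + (1/2)t·wₜθu + t·vₜφ + uθw − (1/4)t·uₜθₓₓ + (3/20)θₓx·uₓₓ + (1/4)θₓt·uₓₜ − (1/4)θt·uₓₓₜ + (4/5)uψv + (3/5)xψ·vₜ + (3/5)xφ·uₜ − (3/20)x·uₓθₓₓ + (3/5)xθ·wₜ + t·wₜψ and Cᵗ = −(3/2)tφu·uₓ − tφvₓ − tψv·uₓ − (1/2)tψu·vₓ − tψwₓ + (1/4)t·uₓₓₓθ − tθw·uₓ − (1/2)tθu·wₓ − (2/5)φu − (3/5)φx·uₓ − (4/5)ψv − (3/5)ψx·vₓ − (6/5)θw − (3/5)θx·wₓ (subscripts denote partial derivatives). Then ∂ₓCˣ + ∂ₜCᵗ = 0 identically on ℝ². -/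

import Mathlib

/-- Partial derivative with respect to the first (space) variable. -/
noncomputable def pdx (f : ℝ → ℝ → ℝ) (x t : ℝ) : ℝ := deriv (fun y => f y t) x

/-- Partial derivative with respect to the second (time) variable. -/
noncomputable def pdt (f : ℝ → ℝ → ℝ) (x t : ℝ) : ℝ := deriv (fun s => f x s) t

/-- The three-field Kaup–Boussinesq system (KB) holds for `(u,v,w)` at the point `(x,t)`:
`∂ₜu = (3/2)u∂ₓu + ∂ₓv`, `∂ₜv = v∂ₓu + (1/2)u∂ₓv + ∂ₓw`,
`∂ₜw = −(1/4)∂ₓ³u + w∂ₓu + (1/2)u∂ₓw`. -/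
def KBAt (u v w : ℝ → ℝ → ℝ) (x t : ℝ) : Prop :=
  pdt u x t = 3/2 * u x t * pdx u x t + pdx v x t ∧
  pdt v x t = v x t * pdx u x t + 1/2 * u x t * pdx v x t + pdx w x t ∧
  pdt w x t = -(1/4) * pdx (pdx (pdx u)) x t + w x t * pdx u x t
    + 1/2 * u x t * pdx w x t

/-- `f : ℝ × ℝ → ℝ` (curried) is smooth in both variables jointly. -/
def Smooth2 (f : ℝ → ℝ → ℝ) : Prop := ContDiff ℝ (⊤ : ℕ∞) (fun p : ℝ × ℝ => f p.1 p.2)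

/-- The adjoint system (AKB) of the three-field Kaup–Boussinesq system holds for
`(φ,ψ,θ)` (relative to the fields `(u,v,w)`) at the point `(x,t)`:
`∂ₜφ = (1/2)ψ∂ₓv + (1/2)θ∂ₓw + (3/2)u∂ₓφ + v∂ₓψ + w∂ₓθ − (1/4)∂ₓ³θ`,
`∂ₜψ = ∂ₓφ + (1/2)u∂ₓψ − (1/2)ψ∂ₓu`,
`∂ₜθ = ∂ₓψ + (1/2)u∂ₓθ − (1/2)θ∂ₓu`. -/
def AKBAt (φ ψ θ u v w : ℝ → ℝ → ℝ) (x t : ℝ) : Prop :=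
  pdt φ x t = 1/2 * ψ x t * pdx v x t + 1/2 * θ x t * pdx w x t
    + 3/2 * u x t * pdx φ x t + v x t * pdx ψ x t + w x t * pdx θ x t
    - 1/4 * pdx (pdx (pdx θ)) x t ∧
  pdt ψ x t = pdx φ x t + 1/2 * u x t * pdx ψ x t - 1/2 * ψ x t * pdx u x t ∧
  pdt θ x t = pdx ψ x t + 1/2 * u x t * pdx θ x t - 1/2 * θ x t * pdx u x t


/-- The conserved current component `Cˣ` associated with the dilation symmetry
`V4` via Ibragimov's conservation theorem. -/
noncomputable def Cx4 (u v w φ ψ θ : ℝ → ℝ → ℝ) (x t : ℝ) : ℝ :=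
  3/5 * φ x t * (u x t)^2 - 1/10 * u x t * pdx (pdx θ) x t
    + 4/5 * v x t * φ x t + 6/5 * w x t * ψ x t
    + 1/4 * pdx θ x t * pdx u x t - 2/5 * θ x t * pdx (pdx u) x t
    + 3/2 * t * pdt u x t * φ x t * u x t + t * pdt u x t * ψ x t * v x t
    + t * pdt u x t * θ x t * w x t + 1/2 * t * pdt v x t * ψ x t * u x t
    + 1/2 * t * pdt w x t * θ x t * u x t + t * pdt v x t * φ x t
    + u x t * θ x t * w x t - 1/4 * t * pdt u x t * pdx (pdx θ) x t
    + 3/20 * pdx θ x t * x * pdx (pdx u) x t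
    + 1/4 * pdx θ x t * t * pdx (pdt u) x t
    - 1/4 * θ x t * t * pdx (pdx (pdt u)) x t
    + 4/5 * u x t * ψ x t * v x t + 3/5 * x * ψ x t * pdt v x t
    + 3/5 * x * φ x t * pdt u x t - 3/20 * x * pdx u x t * pdx (pdx θ) x t
    + 3/5 * x * θ x t * pdt w x t + t * pdt w x t * ψ x t

/-- The conserved current component `Cᵗ` associated with `V4`. -/
noncomputable def Ct4 (u v w φ ψ θ : ℝ → ℝ → ℝ) (x t : ℝ) : ℝ :=
  -(3/2) * t * φ x t * u x t * pdx u x t - t * φ x t * pdx v x t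
    - t * ψ x t * v x t * pdx u x t - 1/2 * t * ψ x t * u x t * pdx v x t
    - t * ψ x t * pdx w x t + 1/4 * t * pdx (pdx (pdx u)) x t * θ x t
    - t * θ x t * w x t * pdx u x t - 1/2 * t * θ x t * u x t * pdx w x t
    - 2/5 * φ x t * u x t - 3/5 * φ x t * x * pdx u x t - 4/5 * ψ x t * v x t
    - 3/5 * ψ x t * x * pdx v x t - 6/5 * θ x t * w x t
    - 3/5 * θ x t * x * pdx w x t

namespace Helper

variable {f : ℝ → ℝ → ℝ}

theorem hasDerivAt_pdx (hf : Smooth2 f) (x t : ℝ) :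
    HasDerivAt (fun y => f y t) (pdx f x t) x := by
  have h1 : HasFDerivAt (fun p : ℝ × ℝ => f p.1 p.2)
      (fderiv ℝ (fun p : ℝ × ℝ => f p.1 p.2) (x, t)) (x, t) :=
    (hf.differentiable (by simp) (x, t)).hasFDerivAt
  have h2 : HasDerivAt (fun y : ℝ => ((y, t) : ℝ × ℝ)) ((1 : ℝ), (0 : ℝ)) x :=
    HasDerivAt.prodMk (hasDerivAt_id x) (hasDerivAt_const x t)
  have h3 := h1.comp_hasDerivAt x h2
  have : pdx f x t = fderiv ℝ (fun p : ℝ × ℝ => f p.1 p.2) (x, t) (1, 0) := by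
    rw [pdx]; exact h3.deriv
  rw [this]; exact h3

theorem hasDerivAt_pdt (hf : Smooth2 f) (x t : ℝ) :
    HasDerivAt (fun s => f x s) (pdt f x t) t := by
  have h1 : HasFDerivAt (fun p : ℝ × ℝ => f p.1 p.2)
      (fderiv ℝ (fun p : ℝ × ℝ => f p.1 p.2) (x, t)) (x, t) :=
    (hf.differentiable (by simp) (x, t)).hasFDerivAt
  have h2 : HasDerivAt (fun s : ℝ => ((x, s) : ℝ × ℝ)) ((0 : ℝ), (1 : ℝ)) t :=
    HasDerivAt.prodMk (hasDerivAt_const t x) (hasDerivAt_id t)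
  have h3 := h1.comp_hasDerivAt t h2
  have : pdt f x t = fderiv ℝ (fun p : ℝ × ℝ => f p.1 p.2) (x, t) (0, 1) := by
    rw [pdt]; exact h3.deriv
  rw [this]; exact h3

theorem pdx_eq (hf : Smooth2 f) (x t : ℝ) :
    pdx f x t = fderiv ℝ (fun p : ℝ × ℝ => f p.1 p.2) (x, t) (1, 0) := by
  have h1 : HasFDerivAt (fun p : ℝ × ℝ => f p.1 p.2)
      (fderiv ℝ (fun p : ℝ × ℝ => f p.1 p.2) (x, t)) (x, t) :=
    (hf.differentiable (by simp) (x, t)).hasFDerivAt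
  have h2 : HasDerivAt (fun y : ℝ => ((y, t) : ℝ × ℝ)) ((1 : ℝ), (0 : ℝ)) x :=
    HasDerivAt.prodMk (hasDerivAt_id x) (hasDerivAt_const x t)
  exact (h1.comp_hasDerivAt x h2).deriv

theorem pdt_eq (hf : Smooth2 f) (x t : ℝ) :
    pdt f x t = fderiv ℝ (fun p : ℝ × ℝ => f p.1 p.2) (x, t) (0, 1) := by
  have h1 : HasFDerivAt (fun p : ℝ × ℝ => f p.1 p.2)
      (fderiv ℝ (fun p : ℝ × ℝ => f p.1 p.2) (x, t)) (x, t) :=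
    (hf.differentiable (by simp) (x, t)).hasFDerivAt
  have h2 : HasDerivAt (fun s : ℝ => ((x, s) : ℝ × ℝ)) ((0 : ℝ), (1 : ℝ)) t :=
    HasDerivAt.prodMk (hasDerivAt_const t x) (hasDerivAt_id t)
  exact (h1.comp_hasDerivAt t h2).deriv

theorem smooth_pdx (hf : Smooth2 f) : Smooth2 (pdx f) := by
  have h : ContDiff ℝ (⊤ : ℕ∞) (fderiv ℝ (fun p : ℝ × ℝ => f p.1 p.2)) :=
    hf.fderiv_right (by simp)
  have : (fun p : ℝ × ℝ => pdx f p.1 p.2)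
      = fun p : ℝ × ℝ => fderiv ℝ (fun q : ℝ × ℝ => f q.1 q.2) p (1, 0) := by
    funext p; exact pdx_eq hf p.1 p.2
  rw [Smooth2, this]
  exact h.clm_apply contDiff_const

theorem smooth_pdt (hf : Smooth2 f) : Smooth2 (pdt f) := by
  have h : ContDiff ℝ (⊤ : ℕ∞) (fderiv ℝ (fun p : ℝ × ℝ => f p.1 p.2)) :=
    hf.fderiv_right (by simp)
  have : (fun p : ℝ × ℝ => pdt f p.1 p.2)
      = fun p : ℝ × ℝ => fderiv ℝ (fun q : ℝ × ℝ => f q.1 q.2) p (0, 1) := by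
    funext p; exact pdt_eq hf p.1 p.2
  rw [Smooth2, this]
  exact h.clm_apply contDiff_const

theorem pdt_pdx_comm (hf : Smooth2 f) : pdt (pdx f) = pdx (pdt f) := by
  funext x t
  set F : ℝ × ℝ → ℝ := fun p => f p.1 p.2 with hF
  have hdF : Differentiable ℝ F := hf.differentiable (by simp)
  have hG : ContDiff ℝ (⊤ : ℕ∞) (fderiv ℝ F) := hf.fderiv_right (by simp)
  have hdG : Differentiable ℝ (fderiv ℝ F) := hG.differentiable (by simp)
  have hsymm := second_derivative_symmetric
    (f := F) (f' := fderiv ℝ F) (f'' := fderiv ℝ (fderiv ℝ F) (x, t))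
    (fun y => (hdF y).hasFDerivAt) ((hdG (x, t)).hasFDerivAt)
    ((1 : ℝ), (0 : ℝ)) ((0 : ℝ), (1 : ℝ))
  -- pdt (pdx f) x t
  have e1 : pdt (pdx f) x t = fderiv ℝ (fderiv ℝ F) (x, t) (0, 1) (1, 0) := by
    rw [pdt]
    have key : ∀ s, pdx f x s = (ContinuousLinearMap.apply ℝ ℝ ((1:ℝ), (0:ℝ)))
        (fderiv ℝ F (x, s)) := fun s => pdx_eq hf x s
    rw [funext fun s => key s]
    have h2 : HasDerivAt (fun s : ℝ => ((x, s) : ℝ × ℝ)) ((0 : ℝ), (1 : ℝ)) t :=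
      HasDerivAt.prodMk (hasDerivAt_const t x) (hasDerivAt_id t)
    have h3 : HasDerivAt (fun s : ℝ => fderiv ℝ F (x, s))
        (fderiv ℝ (fderiv ℝ F) (x, t) (0, 1)) t :=
      ((hdG (x, t)).hasFDerivAt).comp_hasDerivAt t h2
    have h4 := ((ContinuousLinearMap.apply ℝ ℝ ((1:ℝ), (0:ℝ))).hasFDerivAt).comp_hasDerivAt t h3
    exact h4.deriv
  have e2 : pdx (pdt f) x t = fderiv ℝ (fderiv ℝ F) (x, t) (1, 0) (0, 1) := by
    rw [pdx]
    have key : ∀ y, pdt f y t = (ContinuousLinearMap.apply ℝ ℝ ((0:ℝ), (1:ℝ)))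
        (fderiv ℝ F (y, t)) := fun y => pdt_eq hf y t
    rw [funext fun y => key y]
    have h2 : HasDerivAt (fun y : ℝ => ((y, t) : ℝ × ℝ)) ((1 : ℝ), (0 : ℝ)) x :=
      HasDerivAt.prodMk (hasDerivAt_id x) (hasDerivAt_const x t)
    have h3 : HasDerivAt (fun y : ℝ => fderiv ℝ F (y, t))
        (fderiv ℝ (fderiv ℝ F) (x, t) (1, 0)) x :=
      ((hdG (x, t)).hasFDerivAt).comp_hasDerivAt x h2
    have h4 := ((ContinuousLinearMap.apply ℝ ℝ ((0:ℝ), (1:ℝ))).hasFDerivAt).comp_hasDerivAt x h3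
    exact h4.deriv
  rw [e1, e2]
  exact hsymm.symm

end Helper


/-- `(Cˣ, Cᵗ)` is a conserved current: `∂ₓCˣ + ∂ₜCᵗ = 0` on ℝ². -/
theorem stmt_18 (u v w φ ψ θ : ℝ → ℝ → ℝ)
    (hu : Smooth2 u) (hv : Smooth2 v) (hw : Smooth2 w)
    (hφ : Smooth2 φ) (hψ : Smooth2 ψ) (hθ : Smooth2 θ)
    (hKB : ∀ x t : ℝ, KBAt u v w x t)
    (hAKB : ∀ x t : ℝ, AKBAt φ ψ θ u v w x t) :
    ∀ x t : ℝ, pdx (Cx4 u v w φ ψ θ) x t + pdt (Ct4 u v w φ ψ θ) x t = 0 := by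
  intro x t
  have hXd : HasDerivAt (fun y : ℝ => (((((((((((((((((((((((((3 / 5) * φ y t) * (u y t ^ 2)) - (((1 / 10) * u y t) * pdx (pdx θ) y t)) + (((4 / 5) * v y t) * φ y t)) + (((6 / 5) * w y t) * ψ y t)) + (((1 / 4) * pdx θ y t) * pdx u y t)) - (((2 / 5) * θ y t) * pdx (pdx u) y t)) + (((((3 / 2) * t) * pdt u y t) * φ y t) * u y t)) + (((t * pdt u y t) * ψ y t) * v y t)) + (((t * pdt u y t) * θ y t) * w y t)) + (((((1 / 2) * t) * pdt v y t) * ψ y t) * u y t)) + (((((1 / 2) * t) * pdt w y t) * θ y t) * u y t)) + ((t * pdt v y t) * φ y t)) + ((u y t * θ y t) * w y t)) - ((((1 / 4) * t) * pdt u y t) * pdx (pdx θ) y t)) + ((((3 / 20) * pdx θ y t) * y) * pdx (pdx u) y t)) + ((((1 / 4) * pdx θ y t) * t) * pdx (pdt u) y t)) - ((((1 / 4) * θ y t) * t) * pdx (pdx (pdt u)) y t)) + ((((4 / 5) * u y t) * ψ y t) * v y t)) + ((((3 / 5) * y) * ψ y t) * pdt v y t)) + ((((3 / 5) * y) * φ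 y t) * pdt u y t)) - ((((3 / 20) * y) * pdx u y t) * pdx (pdx θ) y t)) + ((((3 / 5) * y) * θ y t) * pdt w y t)) + ((t * pdt w y t) * ψ y t)))
      (((((((((((((((((((((((((((0 * φ x t) + ((3 / 5) * pdx φ x t)) * (u x t ^ 2)) + (((3 / 5) * φ x t) * ((((2:ℕ):ℝ) * (u x t ^ 1)) * pdx u x t))) - ((((0 * u x t) + ((1 / 10) * pdx u x t)) * pdx (pdx θ) x t) + (((1 / 10) * u x t) * pdx (pdx (pdx θ)) x t))) + ((((0 * v x t) + ((4 / 5) * pdx v x t)) * φ x t) + (((4 / 5) * v x t) * pdx φ x t))) + ((((0 * w x t) + ((6 / 5) * pdx w x t)) * ψ x t) + (((6 / 5) * w x t) * pdx ψ x t))) + ((((0 * pdx θ x t) + ((1 / 4) * pdx (pdx θ) x t)) * pdx u x t) + (((1 / 4) * pdx θ x t) * pdx (pdx u) x t))) - ((((0 * θ x t) + ((2 / 5) * pdx θ x t)) * pdx (pdx u) x t) + (((2 / 5) * θ x t) * pdx (pdx (pdx u)) x t))) + ((((((0 * pdt u x t) + (((3 / 2) * t) * pdx (pdt u) x t)) *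 φ x t) + ((((3 / 2) * t) * pdt u x t) * pdx φ x t)) * u x t) + (((((3 / 2) * t) * pdt u x t) * φ x t) * pdx u x t))) + ((((((0 * pdt u x t) + (t * pdx (pdt u) x t)) * ψ x t) + ((t * pdt u x t) * pdx ψ x t)) * v x t) + (((t * pdt u x t) * ψ x t) * pdx v x t))) + ((((((0 * pdt u x t) + (t * pdx (pdt u) x t)) * θ x t) + ((t * pdt u x t) * pdx θ x t)) * w x t) + (((t * pdt u x t) * θ x t) * pdx w x t))) + ((((((0 * pdt v x t) + (((1 / 2) * t) * pdx (pdt v) x t)) * ψ x t) + ((((1 / 2) * t) * pdt v x t) * pdx ψ x t)) * u x t) + (((((1 / 2) * t) * pdt v x t) * ψ x t) * pdx u x t))) + ((((((0 * pdt w x t) + (((1 / 2) * t) * pdx (pdt w) x t)) * θ x t) + ((((1 / 2) * t) * pdt w x t) * pdx θ x t)) * u x t) + (((((1 / 2) * t) * pdt w x t) * θ x t) * pdx u x t))) + ((((0 * pdt v x t) + (t * pdx (pdt v) x t)) * φ x t) + ((t * pdt v x t) * pdx φ x t))) + ((((pdx u x t * θ x t) + (u x t * pdx θ x t)) * w x t)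 + ((u x t * θ x t) * pdx w x t))) - ((((0 * pdt u x t) + (((1 / 4) * t) * pdx (pdt u) x t)) * pdx (pdx θ) x t) + ((((1 / 4) * t) * pdt u x t) * pdx (pdx (pdx θ)) x t))) + ((((((0 * pdx θ x t) + ((3 / 20) * pdx (pdx θ) x t)) * x) + (((3 / 20) * pdx θ x t) * 1)) * pdx (pdx u) x t) + ((((3 / 20) * pdx θ x t) * x) * pdx (pdx (pdx u)) x t))) + ((((((0 * pdx θ x t) + ((1 / 4) * pdx (pdx θ) x t)) * t) + (((1 / 4) * pdx θ x t) * 0)) * pdx (pdt u) x t) + ((((1 / 4) * pdx θ x t) * t) * pdx (pdx (pdt u)) x t))) - ((((((0 * θ x t) + ((1 / 4) * pdx θ x t)) * t) + (((1 / 4) * θ x t) * 0)) * pdx (pdx (pdt u)) x t) + ((((1 / 4) * θ x t) * t) * pdx (pdx (pdx (pdt u))) x t))) + ((((((0 * u x t) + ((4 / 5) * pdx u x t)) * ψ x t) + (((4 / 5) * u x t) * pdx ψ x t)) * v x t) + ((((4 / 5) * u x t) * ψ x t) * pdx v x t))) + ((((((0 * x) + ((3 / 5) * 1)) * ψ x t)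 + (((3 / 5) * x) * pdx ψ x t)) * pdt v x t) + ((((3 / 5) * x) * ψ x t) * pdx (pdt v) x t))) + ((((((0 * x) + ((3 / 5) * 1)) * φ x t) + (((3 / 5) * x) * pdx φ x t)) * pdt u x t) + ((((3 / 5) * x) * φ x t) * pdx (pdt u) x t))) - ((((((0 * x) + ((3 / 20) * 1)) * pdx u x t) + (((3 / 20) * x) * pdx (pdx u) x t)) * pdx (pdx θ) x t) + ((((3 / 20) * x) * pdx u x t) * pdx (pdx (pdx θ)) x t))) + ((((((0 * x) + ((3 / 5) * 1)) * θ x t) + (((3 / 5) * x) * pdx θ x t)) * pdt w x t) + ((((3 / 5) * x) * θ x t) * pdx (pdt w) x t))) + ((((0 * pdt w x t) + (t * pdx (pdt w) x t)) * ψ x t) + ((t * pdt w x t) * pdx ψ x t)))) x :=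
    (((((((((((((((((((((((((hasDerivAt_const x ((3:ℝ) / (5:ℝ))).mul (Helper.hasDerivAt_pdx hφ x t)).mul ((Helper.hasDerivAt_pdx hu x t).pow 2)).sub (((hasDerivAt_const x ((1:ℝ) / (10:ℝ))).mul (Helper.hasDerivAt_pdx hu x t)).mul (Helper.hasDerivAt_pdx (Helper.smooth_pdx (Helper.smooth_pdx hθ)) x t))).add (((hasDerivAt_const x ((4:ℝ) / (5:ℝ))).mul (Helper.hasDerivAt_pdx hv x t)).mul (Helper.hasDerivAt_pdx hφ x t))).add (((hasDerivAt_const x ((6:ℝ) / (5:ℝ))).mul (Helper.hasDerivAt_pdx hw x t)).mul (Helper.hasDerivAt_pdx hψ x t))).add (((hasDerivAt_const x ((1:ℝ) / (4:ℝ))).mul (Helper.hasDerivAt_pdx (Helper.smooth_pdx hθ) x t)).mul (Helper.hasDerivAt_pdx (Helper.smooth_pdx hu) x t))).sub (((hasDerivAt_const x ((2:ℝ) / (5:ℝ))).mul (Helper.hasDerivAt_pdx hθ x t)).mul (Helper.hasDerivAt_pdx (Helper.smooth_pdx (Helper.smooth_pdx hu)) x t))).add ((((hasDerivAt_const x (((3:ℝ)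 / (2:ℝ)) * t)).mul (Helper.hasDerivAt_pdx (Helper.smooth_pdt hu) x t)).mul (Helper.hasDerivAt_pdx hφ x t)).mul (Helper.hasDerivAt_pdx hu x t))).add ((((hasDerivAt_const x t).mul (Helper.hasDerivAt_pdx (Helper.smooth_pdt hu) x t)).mul (Helper.hasDerivAt_pdx hψ x t)).mul (Helper.hasDerivAt_pdx hv x t))).add ((((hasDerivAt_const x t).mul (Helper.hasDerivAt_pdx (Helper.smooth_pdt hu) x t)).mul (Helper.hasDerivAt_pdx hθ x t)).mul (Helper.hasDerivAt_pdx hw x t))).add ((((hasDerivAt_const x (((1:ℝ) / (2:ℝ)) * t)).mul (Helper.hasDerivAt_pdx (Helper.smooth_pdt hv) x t)).mul (Helper.hasDerivAt_pdx hψ x t)).mul (Helper.hasDerivAt_pdx hu x t))).add ((((hasDerivAt_const x (((1:ℝ) / (2:ℝ)) * t)).mul (Helper.hasDerivAt_pdx (Helper.smooth_pdt hw) x t)).mul (Helper.hasDerivAt_pdx hθ x t)).mul (Helper.hasDerivAt_pdx hu x t))).add (((hasDerivAt_const x t).mul (Helper.hasDerivAt_pdx (Helper.smooth_pdt hv) x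 t)).mul (Helper.hasDerivAt_pdx hφ x t))).add (((Helper.hasDerivAt_pdx hu x t).mul (Helper.hasDerivAt_pdx hθ x t)).mul (Helper.hasDerivAt_pdx hw x t))).sub (((hasDerivAt_const x (((1:ℝ) / (4:ℝ)) * t)).mul (Helper.hasDerivAt_pdx (Helper.smooth_pdt hu) x t)).mul (Helper.hasDerivAt_pdx (Helper.smooth_pdx (Helper.smooth_pdx hθ)) x t))).add ((((hasDerivAt_const x ((3:ℝ) / (20:ℝ))).mul (Helper.hasDerivAt_pdx (Helper.smooth_pdx hθ) x t)).mul (hasDerivAt_id' x)).mul (Helper.hasDerivAt_pdx (Helper.smooth_pdx (Helper.smooth_pdx hu)) x t))).add ((((hasDerivAt_const x ((1:ℝ) / (4:ℝ))).mul (Helper.hasDerivAt_pdx (Helper.smooth_pdx hθ) x t)).mul (hasDerivAt_const x t)).mul (Helper.hasDerivAt_pdx (Helper.smooth_pdx (Helper.smooth_pdt hu)) x t))).sub ((((hasDerivAt_const x ((1:ℝ) / (4:ℝ))).mul (Helper.hasDerivAt_pdx hθ x t)).mul (hasDerivAt_const x t)).mul (Helper.hasDerivAt_pdx (Helper.smooth_pdx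 (Helper.smooth_pdx (Helper.smooth_pdt hu))) x t))).add ((((hasDerivAt_const x ((4:ℝ) / (5:ℝ))).mul (Helper.hasDerivAt_pdx hu x t)).mul (Helper.hasDerivAt_pdx hψ x t)).mul (Helper.hasDerivAt_pdx hv x t))).add ((((hasDerivAt_const x ((3:ℝ) / (5:ℝ))).mul (hasDerivAt_id' x)).mul (Helper.hasDerivAt_pdx hψ x t)).mul (Helper.hasDerivAt_pdx (Helper.smooth_pdt hv) x t))).add ((((hasDerivAt_const x ((3:ℝ) / (5:ℝ))).mul (hasDerivAt_id' x)).mul (Helper.hasDerivAt_pdx hφ x t)).mul (Helper.hasDerivAt_pdx (Helper.smooth_pdt hu) x t))).sub ((((hasDerivAt_const x ((3:ℝ) / (20:ℝ))).mul (hasDerivAt_id' x)).mul (Helper.hasDerivAt_pdx (Helper.smooth_pdx hu) x t)).mul (Helper.hasDerivAt_pdx (Helper.smooth_pdx (Helper.smooth_pdx hθ)) x t))).add ((((hasDerivAt_const x ((3:ℝ) / (5:ℝ))).mul (hasDerivAt_id' x)).mul (Helper.hasDerivAt_pdx hθ x t)).mul (Helper.hasDerivAt_pdx (Helper.smooth_pdt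 hw) x t))).add (((hasDerivAt_const x t).mul (Helper.hasDerivAt_pdx (Helper.smooth_pdt hw) x t)).mul (Helper.hasDerivAt_pdx hψ x t)))
  have hTd : HasDerivAt (fun s : ℝ => ((((((((((((((((((-(3 / 2)) * s) * φ x s) * u x s) * pdx u x s) - ((s * φ x s) * pdx v x s)) - (((s * ψ x s) * v x s) * pdx u x s)) - (((((1 / 2) * s) * ψ x s) * u x s) * pdx v x s)) - ((s * ψ x s) * pdx w x s)) + ((((1 / 4) * s) * pdx (pdx (pdx u)) x s) * θ x s)) - (((s * θ x s) * w x s) * pdx u x s)) - (((((1 / 2) * s) * θ x s) * u x s) * pdx w x s)) - (((2 / 5) * φ x s) * u x s)) - ((((3 / 5) * φ x s) * x) * pdx u x s)) - (((4 / 5) * ψ x s) * v x s)) - ((((3 / 5) * ψ x s) * x) * pdx v x s)) - (((6 / 5) * θ x s) * w x s)) - ((((3 / 5) * θ x s) * x) * pdx w x s)))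
      ((((((((((((((((((((((0 * t) + ((-(3 / 2)) * 1)) * φ x t) + (((-(3 / 2)) * t) * pdt φ x t)) * u x t) + ((((-(3 / 2)) * t) * φ x t) * pdt u x t)) * pdx u x t) + (((((-(3 / 2)) * t) * φ x t) * u x t) * pdt (pdx u) x t)) - ((((1 * φ x t) + (t * pdt φ x t)) * pdx v x t) + ((t * φ x t) * pdt (pdx v) x t))) - ((((((1 * ψ x t) + (t * pdt ψ x t)) * v x t) + ((t * ψ x t) * pdt v x t)) * pdx u x t) + (((t * ψ x t) * v x t) * pdt (pdx u) x t))) - ((((((((0 * t) + ((1 / 2) * 1)) * ψ x t) + (((1 / 2) * t) * pdt ψ x t)) * u x t) + ((((1 / 2) * t) * ψ x t) * pdt u x t)) * pdx v x t) + (((((1 / 2) * t) * ψ x t) * u x t) * pdt (pdx v) x t))) - ((((1 * ψ x t) + (t * pdt ψ x t)) * pdx w x t) + ((t * ψ x t) * pdt (pdx w) x t))) + ((((((0 * t) + ((1 / 4) * 1)) * pdx (pdx (pdx u)) x t) + (((1 / 4) * t) * pdt (pdx (pdx (pdx u))) x t)) * θ x t) + ((((1 / 4) * t) * pdx (pdx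 (pdx u)) x t) * pdt θ x t))) - ((((((1 * θ x t) + (t * pdt θ x t)) * w x t) + ((t * θ x t) * pdt w x t)) * pdx u x t) + (((t * θ x t) * w x t) * pdt (pdx u) x t))) - ((((((((0 * t) + ((1 / 2) * 1)) * θ x t) + (((1 / 2) * t) * pdt θ x t)) * u x t) + ((((1 / 2) * t) * θ x t) * pdt u x t)) * pdx w x t) + (((((1 / 2) * t) * θ x t) * u x t) * pdt (pdx w) x t))) - ((((0 * φ x t) + ((2 / 5) * pdt φ x t)) * u x t) + (((2 / 5) * φ x t) * pdt u x t))) - ((((((0 * φ x t) + ((3 / 5) * pdt φ x t)) * x) + (((3 / 5) * φ x t) * 0)) * pdx u x t) + ((((3 / 5) * φ x t) * x) * pdt (pdx u) x t))) - ((((0 * ψ x t) + ((4 / 5) * pdt ψ x t)) * v x t) + (((4 / 5) * ψ x t) * pdt v x t))) - ((((((0 * ψ x t) + ((3 / 5) * pdt ψ x t)) * x) + (((3 / 5) * ψ x t) * 0)) * pdx v x t) + ((((3 / 5) * ψ x t) * x) * pdt (pdx v) x t))) - ((((0 * θ x t) + ((6 / 5) * pdt θ x t)) * w x t) + (((6 /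 5) * θ x t) * pdt w x t))) - ((((((0 * θ x t) + ((3 / 5) * pdt θ x t)) * x) + (((3 / 5) * θ x t) * 0)) * pdx w x t) + ((((3 / 5) * θ x t) * x) * pdt (pdx w) x t)))) t :=
    ((((((((((((((((((hasDerivAt_const t (-((3:ℝ) / (2:ℝ)))).mul (hasDerivAt_id' t)).mul (Helper.hasDerivAt_pdt hφ x t)).mul (Helper.hasDerivAt_pdt hu x t)).mul (Helper.hasDerivAt_pdt (Helper.smooth_pdx hu) x t)).sub (((hasDerivAt_id' t).mul (Helper.hasDerivAt_pdt hφ x t)).mul (Helper.hasDerivAt_pdt (Helper.smooth_pdx hv) x t))).sub ((((hasDerivAt_id' t).mul (Helper.hasDerivAt_pdt hψ x t)).mul (Helper.hasDerivAt_pdt hv x t)).mul (Helper.hasDerivAt_pdt (Helper.smooth_pdx hu) x t))).sub (((((hasDerivAt_const t ((1:ℝ) / (2:ℝ))).mul (hasDerivAt_id' t)).mul (Helper.hasDerivAt_pdt hψ x t)).mul (Helper.hasDerivAt_pdt hu x t)).mul (Helper.hasDerivAt_pdt (Helper.smooth_pdx hv) x t))).sub (((hasDerivAt_id' t).mul (Helper.hasDerivAt_pdt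 hψ x t)).mul (Helper.hasDerivAt_pdt (Helper.smooth_pdx hw) x t))).add ((((hasDerivAt_const t ((1:ℝ) / (4:ℝ))).mul (hasDerivAt_id' t)).mul (Helper.hasDerivAt_pdt (Helper.smooth_pdx (Helper.smooth_pdx (Helper.smooth_pdx hu))) x t)).mul (Helper.hasDerivAt_pdt hθ x t))).sub ((((hasDerivAt_id' t).mul (Helper.hasDerivAt_pdt hθ x t)).mul (Helper.hasDerivAt_pdt hw x t)).mul (Helper.hasDerivAt_pdt (Helper.smooth_pdx hu) x t))).sub (((((hasDerivAt_const t ((1:ℝ) / (2:ℝ))).mul (hasDerivAt_id' t)).mul (Helper.hasDerivAt_pdt hθ x t)).mul (Helper.hasDerivAt_pdt hu x t)).mul (Helper.hasDerivAt_pdt (Helper.smooth_pdx hw) x t))).sub (((hasDerivAt_const t ((2:ℝ) / (5:ℝ))).mul (Helper.hasDerivAt_pdt hφ x t)).mul (Helper.hasDerivAt_pdt hu x t))).sub ((((hasDerivAt_const t ((3:ℝ) / (5:ℝ))).mul (Helper.hasDerivAt_pdt hφ x t)).mul (hasDerivAt_const t x)).mul (Helper.hasDerivAt_pdt (Helper.smooth_pdx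 hu) x t))).sub (((hasDerivAt_const t ((4:ℝ) / (5:ℝ))).mul (Helper.hasDerivAt_pdt hψ x t)).mul (Helper.hasDerivAt_pdt hv x t))).sub ((((hasDerivAt_const t ((3:ℝ) / (5:ℝ))).mul (Helper.hasDerivAt_pdt hψ x t)).mul (hasDerivAt_const t x)).mul (Helper.hasDerivAt_pdt (Helper.smooth_pdx hv) x t))).sub (((hasDerivAt_const t ((6:ℝ) / (5:ℝ))).mul (Helper.hasDerivAt_pdt hθ x t)).mul (Helper.hasDerivAt_pdt hw x t))).sub ((((hasDerivAt_const t ((3:ℝ) / (5:ℝ))).mul (Helper.hasDerivAt_pdt hθ x t)).mul (hasDerivAt_const t x)).mul (Helper.hasDerivAt_pdt (Helper.smooth_pdx hw) x t)))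
  have ex : pdx (Cx4 u v w φ ψ θ) x t = ((((((((((((((((((((((((((0 * φ x t) + ((3 / 5) * pdx φ x t)) * (u x t ^ 2)) + (((3 / 5) * φ x t) * ((((2:ℕ):ℝ) * (u x t ^ 1)) * pdx u x t))) - ((((0 * u x t) + ((1 / 10) * pdx u x t)) * pdx (pdx θ) x t) + (((1 / 10) * u x t) * pdx (pdx (pdx θ)) x t))) + ((((0 * v x t) + ((4 / 5) * pdx v x t)) * φ x t) + (((4 / 5) * v x t) * pdx φ x t))) + ((((0 * w x t) + ((6 / 5) * pdx w x t)) * ψ x t) + (((6 / 5) * w x t) * pdx ψ x t))) + ((((0 * pdx θ x t) + ((1 / 4) * pdx (pdx θ) x t)) * pdx u x t) + (((1 / 4) * pdx θ x t) * pdx (pdx u) x t))) - ((((0 * θ x t) + ((2 / 5) * pdx θ x t)) * pdx (pdx u) x t) + (((2 / 5) * θ x t) * pdx (pdx (pdx u)) x t))) + ((((((0 * pdt u x t) + (((3 / 2) * t) * pdx (pdt u) x t)) * φ x t) + ((((3 / 2) * t) * pdt u x t) * pdx φ x t)) * u x t) + (((((3 / 2) * t) * pdt u x t) * φ x t) * pdx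 u x t))) + ((((((0 * pdt u x t) + (t * pdx (pdt u) x t)) * ψ x t) + ((t * pdt u x t) * pdx ψ x t)) * v x t) + (((t * pdt u x t) * ψ x t) * pdx v x t))) + ((((((0 * pdt u x t) + (t * pdx (pdt u) x t)) * θ x t) + ((t * pdt u x t) * pdx θ x t)) * w x t) + (((t * pdt u x t) * θ x t) * pdx w x t))) + ((((((0 * pdt v x t) + (((1 / 2) * t) * pdx (pdt v) x t)) * ψ x t) + ((((1 / 2) * t) * pdt v x t) * pdx ψ x t)) * u x t) + (((((1 / 2) * t) * pdt v x t) * ψ x t) * pdx u x t))) + ((((((0 * pdt w x t) + (((1 / 2) * t) * pdx (pdt w) x t)) * θ x t) + ((((1 / 2) * t) * pdt w x t) * pdx θ x t)) * u x t) + (((((1 / 2) * t) * pdt w x t) * θ x t) * pdx u x t))) + ((((0 * pdt v x t) + (t * pdx (pdt v) x t)) * φ x t) + ((t * pdt v x t) * pdx φ x t))) + ((((pdx u x t * θ x t) + (u x t * pdx θ x t)) * w x t) + ((u x t * θ x t) * pdx w x t))) - ((((0 * pdt u x t) + (((1 / 4) * t) * pdx (pdt u) x t)) * pdx (pdx θ)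 x t) + ((((1 / 4) * t) * pdt u x t) * pdx (pdx (pdx θ)) x t))) + ((((((0 * pdx θ x t) + ((3 / 20) * pdx (pdx θ) x t)) * x) + (((3 / 20) * pdx θ x t) * 1)) * pdx (pdx u) x t) + ((((3 / 20) * pdx θ x t) * x) * pdx (pdx (pdx u)) x t))) + ((((((0 * pdx θ x t) + ((1 / 4) * pdx (pdx θ) x t)) * t) + (((1 / 4) * pdx θ x t) * 0)) * pdx (pdt u) x t) + ((((1 / 4) * pdx θ x t) * t) * pdx (pdx (pdt u)) x t))) - ((((((0 * θ x t) + ((1 / 4) * pdx θ x t)) * t) + (((1 / 4) * θ x t) * 0)) * pdx (pdx (pdt u)) x t) + ((((1 / 4) * θ x t) * t) * pdx (pdx (pdx (pdt u))) x t))) + ((((((0 * u x t) + ((4 / 5) * pdx u x t)) * ψ x t) + (((4 / 5) * u x t) * pdx ψ x t)) * v x t) + ((((4 / 5) * u x t) * ψ x t) * pdx v x t))) + ((((((0 * x) + ((3 / 5) * 1)) * ψ x t) + (((3 / 5) * x) * pdx ψ x t)) * pdt v x t) + ((((3 / 5) * x) * ψ x t) * pdx (pdt v) x t))) + ((((((0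 * x) + ((3 / 5) * 1)) * φ x t) + (((3 / 5) * x) * pdx φ x t)) * pdt u x t) + ((((3 / 5) * x) * φ x t) * pdx (pdt u) x t))) - ((((((0 * x) + ((3 / 20) * 1)) * pdx u x t) + (((3 / 20) * x) * pdx (pdx u) x t)) * pdx (pdx θ) x t) + ((((3 / 20) * x) * pdx u x t) * pdx (pdx (pdx θ)) x t))) + ((((((0 * x) + ((3 / 5) * 1)) * θ x t) + (((3 / 5) * x) * pdx θ x t)) * pdt w x t) + ((((3 / 5) * x) * θ x t) * pdx (pdt w) x t))) + ((((0 * pdt w x t) + (t * pdx (pdt w) x t)) * ψ x t) + ((t * pdt w x t) * pdx ψ x t))) := by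
    rw [pdx]; exact hXd.deriv
  have et : pdt (Ct4 u v w φ ψ θ) x t = (((((((((((((((((((((0 * t) + ((-(3 / 2)) * 1)) * φ x t) + (((-(3 / 2)) * t) * pdt φ x t)) * u x t) + ((((-(3 / 2)) * t) * φ x t) * pdt u x t)) * pdx u x t) + (((((-(3 / 2)) * t) * φ x t) * u x t) * pdt (pdx u) x t)) - ((((1 * φ x t) + (t * pdt φ x t)) * pdx v x t) + ((t * φ x t) * pdt (pdx v) x t))) - ((((((1 * ψ x t) + (t * pdt ψ x t)) * v x t) + ((t * ψ x t) * pdt v x t)) * pdx u x t) + (((t * ψ x t) * v x t) * pdt (pdx u) x t))) - ((((((((0 * t) + ((1 / 2) * 1)) * ψ x t) + (((1 / 2) * t) * pdt ψ x t)) * u x t) + ((((1 / 2) * t) * ψ x t) * pdt u x t)) * pdx v x t) + (((((1 / 2) * t) * ψ x t) * u x t) * pdt (pdx v) x t))) - ((((1 * ψ x t) + (t * pdt ψ x t)) * pdx w x t) + ((t * ψ x t) * pdt (pdx w) x t))) + ((((((0 * t) + ((1 / 4) * 1)) * pdx (pdx (pdx u)) x t) + (((1 / 4) * t) * pdt (pdx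 (pdx (pdx u))) x t)) * θ x t) + ((((1 / 4) * t) * pdx (pdx (pdx u)) x t) * pdt θ x t))) - ((((((1 * θ x t) + (t * pdt θ x t)) * w x t) + ((t * θ x t) * pdt w x t)) * pdx u x t) + (((t * θ x t) * w x t) * pdt (pdx u) x t))) - ((((((((0 * t) + ((1 / 2) * 1)) * θ x t) + (((1 / 2) * t) * pdt θ x t)) * u x t) + ((((1 / 2) * t) * θ x t) * pdt u x t)) * pdx w x t) + (((((1 / 2) * t) * θ x t) * u x t) * pdt (pdx w) x t))) - ((((0 * φ x t) + ((2 / 5) * pdt φ x t)) * u x t) + (((2 / 5) * φ x t) * pdt u x t))) - ((((((0 * φ x t) + ((3 / 5) * pdt φ x t)) * x) + (((3 / 5) * φ x t) * 0)) * pdx u x t) + ((((3 / 5) * φ x t) * x) * pdt (pdx u) x t))) - ((((0 * ψ x t) + ((4 / 5) * pdt ψ x t)) * v x t) + (((4 / 5) * ψ x t) * pdt v x t))) - ((((((0 * ψ x t) + ((3 / 5) * pdt ψ x t)) * x) + (((3 / 5) * ψ x t) * 0)) * pdx v x t) + ((((3 / 5) * ψ x t) * x) * pdt (pdx v) x t)))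 - ((((0 * θ x t) + ((6 / 5) * pdt θ x t)) * w x t) + (((6 / 5) * θ x t) * pdt w x t))) - ((((((0 * θ x t) + ((3 / 5) * pdt θ x t)) * x) + (((3 / 5) * θ x t) * 0)) * pdx w x t) + ((((3 / 5) * θ x t) * x) * pdt (pdx w) x t))) := by
    rw [pdt]; exact hTd.deriv
  rw [ex, et, Helper.pdt_pdx_comm (Helper.smooth_pdx (Helper.smooth_pdx hu)),
    Helper.pdt_pdx_comm (Helper.smooth_pdx hu),
    Helper.pdt_pdx_comm hu, Helper.pdt_pdx_comm hv, Helper.pdt_pdx_comm hw,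
    (hKB x t).1, (hKB x t).2.1, (hKB x t).2.2,
    (hAKB x t).1, (hAKB x t).2.1, (hAKB x t).2.2]
  ring
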